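/- Let Q be a finite faithful quandle and let α be a minimal congruence of Q. Then α equals the orbit relation O_{Dis_α} of the subgroup Dis_α (i.e., x α y iff n(x) = y for some n ∈ Dis_α), and Dis_α is a minimal nontrivial normal subgroup of LMlt(Q): Dis_α ≠ 1, Dis_α is normal in LMlt(Q), and every normal subgroup of LMlt(Q) properly contained in Dis_α is trivial. -/

import Mathlib

/-!
Elements of `LMlt(Q)` act by automorphisms, so for a subgroup `N ≤ LMlt(Q)` normalized by
`LMlt(Q)` the orbit relation `O_N` is a congruence, and `Dis_{O_N} ≤ N` because
`L x * (L (n x))⁻¹ = (L x * n * (L x)⁻¹) * n⁻¹`. For a congruence `α`, every element of `Dis_α`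
moves points inside their `α`-classes, so `O_N ≤ α` whenever `N ≤ Dis_α`; minimality of `α`
then leaves `O_N = α` or `N = 1`. For `N = Dis_α` the second case is excluded by faithfulness,
and for `N < Dis_α` the first one would give `Dis_α ≤ N`.
-/

/-- A quandle structure on `Q`, given by its left translations: each `L x` is a
permutation of `Q`, `x * x = x`, and `x * (y * z) = (x * y) * (x * z)`
(writing `x * y` for `L x y`). -/
structure QuandleStr (Q : Type*) where
  L : Q → Equiv.Perm Q
  idem : ∀ x : Q, L x x = x
  selfDistrib : ∀ x y z : Q, L x (L y z) = L (L x y) (L x z)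

namespace QuandleStr

variable {Q : Type*} (S : QuandleStr Q)

/-- The left multiplication group `LMlt(Q)`, generated by all left translations. -/
def Lmlt : Subgroup (Equiv.Perm Q) :=
  Subgroup.closure (Set.range S.L)

/-- The displacement group `Dis(Q)`, generated by all `L x * (L y)⁻¹`. -/
def Dis : Subgroup (Equiv.Perm Q) :=
  Subgroup.closure {g : Equiv.Perm Q | ∃ x y : Q, g = S.L x * (S.L y)⁻¹}

/-- A congruence of the quandle: an equivalence relation compatible with `*` and `\`. -/
def IsCong (θ : Setoid Q) : Prop :=
  ∀ x y u v : Q, θ.r x y → θ.r u v →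
    θ.r (S.L x u) (S.L y v) ∧ θ.r ((S.L x)⁻¹ u) ((S.L y)⁻¹ v)

/-- A quandle is faithful if `x ↦ L x` is injective. -/
def Faithful : Prop := Function.Injective S.L

/-- A quandle is connected if `LMlt(Q)` acts transitively. -/
def Connected : Prop := ∀ x y : Q, ∃ g ∈ S.Lmlt, g x = y

/-- A quandle is latin if all right translations are bijective. -/
def Latin : Prop := ∀ y : Q, Function.Bijective fun x : Q => S.L x y

/-- `θ` is a minimal congruence: not equality, and the only congruence strictly
contained in it is equality. -/
def IsMinCong (θ : Setoid Q) : Prop :=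
  S.IsCong θ ∧ θ ≠ ⊥ ∧ ∀ β : Setoid Q, S.IsCong β → β < θ → β = ⊥

/-- `θ` is a maximal congruence: not the all relation, and the only congruence strictly
containing it is the all relation. -/
def IsMaxCong (θ : Setoid Q) : Prop :=
  S.IsCong θ ∧ θ ≠ ⊤ ∧ ∀ β : Setoid Q, S.IsCong β → θ < β → β = ⊤

/-- `Dis_α`: the subgroup generated by the `L x * (L y)⁻¹` with `x α y`. -/
def DisC (r : Q → Q → Prop) : Subgroup (Equiv.Perm Q) :=
  Subgroup.closure {g : Equiv.Perm Q | ∃ x y : Q, r x y ∧ g = S.L x * (S.L y)⁻¹}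

/-- `Dis^α`: the elements of `Dis(Q)` displacing every point inside its `α`-class. -/
def DisUp (θ : Setoid Q) : Subgroup (Equiv.Perm Q) where
  carrier := {g : Equiv.Perm Q | g ∈ S.Dis ∧ ∀ x : Q, θ.r (g x) x}
  one_mem' := ⟨S.Dis.one_mem, fun x => θ.iseqv.refl x⟩
  mul_mem' := by
    rintro a b ⟨ha, ha2⟩ ⟨hb, hb2⟩
    refine ⟨S.Dis.mul_mem ha hb, fun x => ?_⟩
    rw [Equiv.Perm.mul_apply]
    exact θ.iseqv.trans (ha2 (b x)) (hb2 x)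
  inv_mem' := by
    rintro a ⟨ha, ha2⟩
    refine ⟨S.Dis.inv_mem ha, fun x => ?_⟩
    have h := ha2 (a⁻¹ x)
    rw [show a (a⁻¹ x) = x from a.apply_symm_apply x] at h
    exact θ.iseqv.symm h

end QuandleStr

/-- The orbit equivalence relation of a subgroup of permutations. -/
def orbSetoid {Q : Type*} (N : Subgroup (Equiv.Perm Q)) : Setoid Q where
  r x y := ∃ n ∈ N, n x = y
  iseqv := by
    refine ⟨fun x => ⟨1, N.one_mem, rfl⟩, ?_, ?_⟩
    · rintro x y ⟨n, hn, rfl⟩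
      exact ⟨n⁻¹, N.inv_mem hn, (n.symm_apply_apply x : n⁻¹ (n x) = x)⟩
    · rintro x y z ⟨n, hn, rfl⟩ ⟨m, hm, rfl⟩
      exact ⟨m * n, N.mul_mem hm hn, Equiv.Perm.mul_apply m n x⟩

theorem eq_bot_of_orbSetoid_eq_bot {Q : Type*} {N : Subgroup (Equiv.Perm Q)}
    (h : orbSetoid N = ⊥) : N = ⊥ := by
  rw [Subgroup.eq_bot_iff_forall]
  intro n hn
  ext u
  have hu : (orbSetoid N).r u (n u) := ⟨n, hn, rfl⟩
  rw [h] at hu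
  exact hu.symm

namespace QuandleStr

variable {Q : Type*} (S : QuandleStr Q)

theorem L_mem_Lmlt (x : Q) : S.L x ∈ S.Lmlt :=
  Subgroup.subset_closure ⟨x, rfl⟩

theorem DisC_le_Lmlt (r : Q → Q → Prop) : S.DisC r ≤ S.Lmlt := by
  rw [DisC, Subgroup.closure_le]
  rintro _ ⟨x, y, -, rfl⟩
  exact mul_mem (S.L_mem_Lmlt x) (inv_mem (S.L_mem_Lmlt y))

theorem map_L_of_mem_Lmlt {g : Equiv.Perm Q} (hg : g ∈ S.Lmlt) (x u : Q) :
    g (S.L x u) = S.L (g x) (g u) := by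
  induction hg using Subgroup.closure_induction generalizing x u with
  | mem _ ha =>
    obtain ⟨z, rfl⟩ := ha
    exact S.selfDistrib z x u
  | one => rfl
  | mul a b _ _ iha ihb =>
    simp only [Equiv.Perm.mul_apply, ihb, iha]
  | inv a _ ih =>
    apply a.injective
    simpa using (ih (a⁻¹ x) (a⁻¹ u)).symm

theorem conj_L_of_mem_Lmlt {g : Equiv.Perm Q} (hg : g ∈ S.Lmlt) (x : Q) :
    g * S.L x * g⁻¹ = S.L (g x) := by
  ext u
  simp [Equiv.Perm.mul_apply, S.map_L_of_mem_Lmlt hg]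

variable {S}

theorem IsCong.apply_of_mem_Lmlt {θ : Setoid Q} (hθ : S.IsCong θ) {g : Equiv.Perm Q}
    (hg : g ∈ S.Lmlt) {x y : Q} (hxy : θ.r x y) : θ.r (g x) (g y) := by
  induction hg using Subgroup.closure_induction'' generalizing x y with
  | mem _ ha =>
    obtain ⟨z, rfl⟩ := ha
    exact (hθ z z x y (θ.iseqv.refl z) hxy).1
  | inv_mem _ ha =>
    obtain ⟨z, rfl⟩ := ha
    exact (hθ z z x y (θ.iseqv.refl z) hxy).2
  | one => exact hxy
  | mul a b _ _ iha ihb => exact iha (ihb hxy)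

theorem IsCong.rel_apply_of_mem_DisC {θ : Setoid Q} (hθ : S.IsCong θ) {n : Equiv.Perm Q}
    (hn : n ∈ S.DisC θ.r) (u : Q) : θ.r (n u) u := by
  induction hn using Subgroup.closure_induction generalizing u with
  | mem _ ha =>
    obtain ⟨x, y, hxy, rfl⟩ := ha
    simpa using (hθ x y ((S.L y)⁻¹ u) ((S.L y)⁻¹ u) hxy (θ.iseqv.refl _)).1
  | one => exact θ.iseqv.refl u
  | mul a b _ _ iha ihb => exact θ.iseqv.trans (iha (b u)) (ihb u)
  | inv a _ ih => simpa using θ.iseqv.symm (ih (a⁻¹ u))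

theorem IsCong.orbSetoid_le {θ : Setoid Q} (hθ : S.IsCong θ) {N : Subgroup (Equiv.Perm Q)}
    (hN : N ≤ S.DisC θ.r) : orbSetoid N ≤ θ := by
  rintro x _ ⟨n, hn, rfl⟩
  exact θ.iseqv.symm (hθ.rel_apply_of_mem_DisC (hN hn) x)

theorem IsCong.conj_mem_DisC {θ : Setoid Q} (hθ : S.IsCong θ) {g : Equiv.Perm Q}
    (hg : g ∈ S.Lmlt) {n : Equiv.Perm Q} (hn : n ∈ S.DisC θ.r) : g * n * g⁻¹ ∈ S.DisC θ.r := by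
  have hmap : (S.DisC θ.r).map (MulAut.conj g).toMonoidHom ≤ S.DisC θ.r := by
    rw [DisC, MonoidHom.map_closure, Subgroup.closure_le]
    rintro _ ⟨_, ⟨x, y, hxy, rfl⟩, rfl⟩
    refine Subgroup.subset_closure ⟨g x, g y, hθ.apply_of_mem_Lmlt hg hxy, ?_⟩
    rw [← S.conj_L_of_mem_Lmlt hg, ← S.conj_L_of_mem_Lmlt hg]
    simp only [MulEquiv.coe_toMonoidHom, MulAut.conj_apply]
    group
  exact hmap ⟨n, hn, rfl⟩

variable (S)

theorem isCong_orbSetoid {N : Subgroup (Equiv.Perm Q)} (hN : N ≤ S.Lmlt)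
    (hnorm : ∀ g ∈ S.Lmlt, ∀ n ∈ N, g * n * g⁻¹ ∈ N) : S.IsCong (orbSetoid N) := by
  rintro x _ u _ ⟨n, hn, rfl⟩ ⟨m, hm, rfl⟩
  have hconj := S.conj_L_of_mem_Lmlt (hN hn) x
  constructor
  · refine ⟨n * (S.L x * (n⁻¹ * m) * (S.L x)⁻¹), ?_, ?_⟩
    · exact N.mul_mem hn (hnorm _ (S.L_mem_Lmlt x) _ (N.mul_mem (N.inv_mem hn) hm))
    · rw [← hconj]
      simp [Equiv.Perm.mul_apply]
  · refine ⟨n * ((S.L x)⁻¹ * (n⁻¹ * m) * S.L x), ?_, ?_⟩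
    · refine N.mul_mem hn ?_
      simpa using hnorm _ (inv_mem (S.L_mem_Lmlt x)) _ (N.mul_mem (N.inv_mem hn) hm)
    · rw [← hconj]
      simp [Equiv.Perm.mul_apply]

theorem DisC_orbSetoid_le {N : Subgroup (Equiv.Perm Q)} (hN : N ≤ S.Lmlt)
    (hnorm : ∀ g ∈ S.Lmlt, ∀ n ∈ N, g * n * g⁻¹ ∈ N) : S.DisC (orbSetoid N).r ≤ N := by
  rw [DisC, Subgroup.closure_le]
  rintro _ ⟨x, _, ⟨n, hn, rfl⟩, rfl⟩
  have hcomm : S.L x * (S.L (n x))⁻¹ = (S.L x * n * (S.L x)⁻¹) * n⁻¹ := by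
    rw [← S.conj_L_of_mem_Lmlt (hN hn)]
    group
  rw [hcomm]
  exact N.mul_mem (hnorm _ (S.L_mem_Lmlt x) _ hn) (N.inv_mem hn)

variable {S}

theorem Faithful.DisC_ne_bot (hS : S.Faithful) {θ : Setoid Q} (hθ : θ ≠ ⊥) :
    S.DisC θ.r ≠ ⊥ := by
  obtain ⟨x, y, hxy, hne⟩ : ∃ x y, θ.r x y ∧ x ≠ y := by
    by_contra! h
    exact hθ (le_antisymm (fun x y hxy => h x y hxy) bot_le)
  intro hbot
  have hmem : S.L x * (S.L y)⁻¹ ∈ S.DisC θ.r := Subgroup.subset_closure ⟨x, y, hxy, rfl⟩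
  rw [hbot, Subgroup.mem_bot, mul_inv_eq_one] at hmem
  exact hne (hS hmem)

theorem IsMinCong.orbSetoid_eq_or_eq_bot {α : Setoid Q} (hα : S.IsMinCong α)
    {N : Subgroup (Equiv.Perm Q)} (hN : N ≤ S.Lmlt)
    (hnorm : ∀ g ∈ S.Lmlt, ∀ n ∈ N, g * n * g⁻¹ ∈ N) (hNα : N ≤ S.DisC α.r) :
    orbSetoid N = α ∨ N = ⊥ := by
  rcases (hα.1.orbSetoid_le hNα).lt_or_eq with hlt | heq
  · exact Or.inr (eq_bot_of_orbSetoid_eq_bot (hα.2.2 _ (S.isCong_orbSetoid hN hnorm) hlt))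
  · exact Or.inl heq

theorem IsMinCong.orbSetoid_DisC_eq (hS : S.Faithful) {α : Setoid Q} (hα : S.IsMinCong α) :
    orbSetoid (S.DisC α.r) = α :=
  (hα.orbSetoid_eq_or_eq_bot (S.DisC_le_Lmlt α.r) (fun _ hg _ hn => hα.1.conj_mem_DisC hg hn)
    le_rfl).resolve_right (hS.DisC_ne_bot hα.2.1)

end QuandleStr

theorem stmt7_general {Q : Type*} (S : QuandleStr Q) (hfaith : S.Faithful)
    (α : Setoid Q) (hmin : S.IsMinCong α) :
    (∀ x y : Q, α.r x y ↔ ∃ n ∈ S.DisC α.r, n x = y) ∧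
    S.DisC α.r ≠ ⊥ ∧
    S.DisC α.r ≤ S.Lmlt ∧
    (∀ g ∈ S.Lmlt, ∀ n ∈ S.DisC α.r, g * n * g⁻¹ ∈ S.DisC α.r) ∧
    (∀ T : Subgroup (Equiv.Perm Q), T ≤ S.Lmlt →
      (∀ g ∈ S.Lmlt, ∀ n ∈ T, g * n * g⁻¹ ∈ T) → T < S.DisC α.r → T = ⊥) := by
  refine ⟨fun x y => ?_, hfaith.DisC_ne_bot hmin.2.1, S.DisC_le_Lmlt α.r,
    fun g hg n hn => hmin.1.conj_mem_DisC hg hn, fun T hT hTnorm hlt => ?_⟩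
  · rw [← Setoid.ext_iff.1 (hmin.orbSetoid_DisC_eq hfaith) x y]
    rfl
  · refine (hmin.orbSetoid_eq_or_eq_bot hT hTnorm hlt.le).resolve_left fun horb => ?_
    have hDisC_le : S.DisC α.r ≤ T := horb ▸ S.DisC_orbSetoid_le hT hTnorm
    exact hlt.not_ge hDisC_le

theorem stmt7 {Q : Type*} [Finite Q] (S : QuandleStr Q) (hfaith : S.Faithful)
    (α : Setoid Q) (hmin : S.IsMinCong α) :
    (∀ x y : Q, α.r x y ↔ ∃ n ∈ S.DisC α.r, n x = y) ∧
    S.DisC α.r ≠ ⊥ ∧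
    S.DisC α.r ≤ S.Lmlt ∧
    (∀ g ∈ S.Lmlt, ∀ n ∈ S.DisC α.r, g * n * g⁻¹ ∈ S.DisC α.r) ∧
    (∀ T : Subgroup (Equiv.Perm Q), T ≤ S.Lmlt →
      (∀ g ∈ S.Lmlt, ∀ n ∈ T, g * n * g⁻¹ ∈ T) → T < S.DisC α.r → T = ⊥) :=
  stmt7_general S hfaith α hmin
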